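/- Let p ≥ 0, γ > 0, α > 0, T > 0, let w : [0,T] → [0,∞) be C¹ with w(0) > 0, and let f : [0,T] → ℝ be continuous. Assume |∫₀ᵗ (1+s)^p f(s) ds| ≤ min{ 1/(4γ w(0)^γ), α/(2(p+1)) } (1+t)^{p+1} for all t ∈ [0,T]. If w satisfies w'(t) ≥ -2(1+t)^p w(t)^{1+γ} (α + f(t)) on [0,T], then w(t) ≥ w(0) [1 + 3αγ w(0)^γ/(p+1)]^{-1/γ} · (1+t)^{-(p+1)/γ} for all t ∈ [0,T]. -/

import Mathlib

/-!
With `v = w ^ (-γ)`, the supersolution inequality becomes `v' ≤ 2γ (1 + t) ^ p (α + f)` as long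
as `w > 0`. Integrating, the hypothesis on the weighted primitive of `f` gives
`v t ≤ v 0 · C · (1 + t) ^ (p + 1)` with `C = 1 + 3αγ w(0) ^ γ / (p + 1)`, which is the claimed
lower bound for `w`. This bound is positive, so `w` has no zero in `[0, T]`: at a first zero the
bound would hold on the interval before it, hence, by continuity, at the zero itself.
-/

open Real Set intervalIntegral

theorem integral_one_add_rpow {p : ℝ} (hp : -1 < p) (t : ℝ) :
    ∫ s in (0:ℝ)..t, (1 + s) ^ p = ((1 + t) ^ (p + 1) - 1) / (p + 1) := by
  rw [integral_comp_add_left (fun x => x ^ p), add_zero, integral_rpow (Or.inl hp), one_rpow]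

theorem rpow_neg_sub_le_integral_of_le_deriv {a b γ : ℝ} {w w' k : ℝ → ℝ} (hab : a ≤ b)
    (hγ : 0 ≤ γ) (hw_pos : ∀ t ∈ Icc a b, 0 < w t) (hw : ∀ t ∈ Icc a b, HasDerivAt w (w' t) t)
    (hk : ContinuousOn k (Icc a b)) (hineq : ∀ t ∈ Icc a b, -(k t * w t ^ (1 + γ)) ≤ w' t) :
    w b ^ (-γ) - w a ^ (-γ) ≤ γ * ∫ t in a..b, k t := by
  rw [← integral_const_mul]
  have hderiv (t : ℝ) (ht : t ∈ Icc a b) :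
      HasDerivAt (fun s => w s ^ (-γ)) (w' t * (-γ) * w t ^ (-γ - 1)) t :=
    (hw t ht).rpow_const (Or.inl (hw_pos t ht).ne')
  refine sub_le_integral_of_hasDeriv_right_of_le hab
    (fun t ht => (hderiv t ht).continuousAt.continuousWithinAt)
    (fun t ht => (hderiv t (Ioo_subset_Icc_self ht)).hasDerivWithinAt)
    ((continuousOn_const.mul hk).integrableOn_Icc) fun t ht => ?_
  have ht := Ioo_subset_Icc_self ht
  have hwt := hw_pos t ht
  have hcancel : w t ^ (1 + γ) * w t ^ (-γ - 1) = 1 := by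
    rw [← rpow_add hwt, show 1 + γ + (-γ - 1) = 0 by ring, rpow_zero]
  have := mul_le_mul_of_nonneg_right (hineq t ht) (mul_nonneg hγ (rpow_pos_of_pos hwt (-γ - 1)).le)
  linear_combination this + γ * k t * hcancel

theorem rpow_neg_le_of_supersolution {p γ α t : ℝ} {w w' f : ℝ → ℝ} (hp : -1 < p) (hγ : 0 ≤ γ)
    (hα : 0 ≤ α) (ht : 0 ≤ t) (hw_pos : ∀ s ∈ Icc 0 t, 0 < w s)
    (hw : ∀ s ∈ Icc 0 t, HasDerivAt w (w' s) s) (hf : ContinuousOn f (Icc 0 t))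
    (hf_int : ∫ s in (0:ℝ)..t, (1 + s) ^ p * f s ≤ α / (2 * (p + 1)) * (1 + t) ^ (p + 1))
    (hineq : ∀ s ∈ Icc 0 t, -2 * (1 + s) ^ p * w s ^ (1 + γ) * (α + f s) ≤ w' s) :
    w t ^ (-γ) ≤ w 0 ^ (-γ) * (1 + 3 * α * γ * w 0 ^ γ / (p + 1)) * (1 + t) ^ (p + 1) := by
  have hweight : ContinuousOn (fun s : ℝ => (1 + s) ^ p) (Icc 0 t) :=
    (continuousOn_const.add continuousOn_id).rpow_const fun s hs =>
      Or.inl (show (0:ℝ) < 1 + s by linarith [hs.1]).ne'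
  have hcomp := rpow_neg_sub_le_integral_of_le_deriv ht hγ hw_pos hw
    (k := fun s => 2 * α * (1 + s) ^ p + 2 * ((1 + s) ^ p * f s))
    ((continuousOn_const.mul hweight).add (continuousOn_const.mul (hweight.mul hf)))
    fun s hs => by linarith [hineq s hs]
  have hint : IntervalIntegrable (fun s : ℝ => (1 + s) ^ p) MeasureTheory.volume 0 t :=
    hweight.intervalIntegrable_of_Icc ht
  have hint_f : IntervalIntegrable (fun s : ℝ => (1 + s) ^ p * f s) MeasureTheory.volume 0 t :=
    (hweight.mul hf).intervalIntegrable_of_Icc ht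
  rw [integral_add (hint.const_mul _) (hint_f.const_mul _), integral_const_mul,
    integral_const_mul, integral_one_add_rpow hp] at hcomp
  set X := (1 + t) ^ (p + 1)
  have hX : 1 ≤ X := one_le_rpow (by linarith) (by linarith)
  have hw0 : w 0 ^ (-γ) * w 0 ^ γ = 1 := by
    rw [← rpow_add (hw_pos 0 ⟨le_rfl, ht⟩), neg_add_cancel, rpow_zero]
  have hp1 : 0 < p + 1 := by linarith
  have hw0_le : w 0 ^ (-γ) ≤ w 0 ^ (-γ) * X :=
    le_mul_of_one_le_right (rpow_pos_of_pos (hw_pos 0 ⟨le_rfl, ht⟩) _).le hX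
  calc w t ^ (-γ)
      ≤ w 0 ^ (-γ) + γ * (2 * α * ((X - 1) / (p + 1)) + 2 * (α / (2 * (p + 1)) * X)) := by
        linarith [mul_le_mul_of_nonneg_left hf_int hγ]
    _ = w 0 ^ (-γ) + 3 * α * γ * X / (p + 1) - 2 * α * γ / (p + 1) := by field_simp; ring
    _ ≤ w 0 ^ (-γ) * X + 3 * α * γ * X / (p + 1) := by
        have : 0 ≤ 2 * α * γ / (p + 1) := by positivity
        linarith
    _ = _ := by linear_combination -(3 * α * γ * X / (p + 1)) * hw0

theorem mul_rpow_le_of_rpow_neg_le {x y c u q γ : ℝ} (hγ : 0 < γ) (hx : 0 < x) (hy : 0 < y)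
    (hc : 0 < c) (hu : 0 < u) (h : y ^ (-γ) ≤ x ^ (-γ) * c * u ^ q) :
    x * c ^ (-(1 / γ)) * u ^ (-q / γ) ≤ y := by
  have hu' : (u ^ (-q / γ)) ^ (-γ) = u ^ q := by
    rw [← rpow_mul hu.le]; field_simp
  have hc' : c = (c ^ (-(1 / γ))) ^ (-γ) := by
    rw [← rpow_mul hc.le, show -(1 / γ) * -γ = 1 by field_simp, rpow_one]
  rw [← rpow_le_rpow_iff_of_neg hy (by positivity) (neg_lt_zero.2 hγ), mul_rpow (by positivity)
    (by positivity), mul_rpow hx.le (by positivity), hu', ← hc']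
  exact h

theorem pos_of_forall_pos_imp_le {a b : ℝ} {w L : ℝ → ℝ} (hw : ContinuousOn w (Icc a b))
    (hL : ContinuousOn L (Icc a b)) (hL_pos : ∀ t ∈ Icc a b, 0 < L t) (ha : 0 < w a)
    (hbound : ∀ t ∈ Icc a b, (∀ s ∈ Icc a t, 0 < w s) → L t ≤ w t) :
    ∀ t ∈ Icc a b, 0 < w t := by
  by_contra! ⟨t₁, ht₁, hwt₁⟩
  set Z := Icc a b ∩ w ⁻¹' Iic 0
  have hZ_bdd : BddBelow Z := ⟨a, fun z hz => hz.1.1⟩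
  obtain ⟨⟨ha₀, ht₀b⟩, hwt₀⟩ : sInf Z ∈ Z :=
    (hw.preimage_isClosed_of_isClosed isClosed_Icc isClosed_Iic).csInf_mem ⟨t₁, ht₁, hwt₁⟩ hZ_bdd
  set t₀ := sInf Z
  replace hwt₀ : w t₀ ≤ 0 := hwt₀
  have hat₀ : a < t₀ := ha₀.lt_of_ne fun h => (h ▸ hwt₀).not_gt ha
  have hpos : ∀ s ∈ Ico a t₀, 0 < w s := fun s hs => by
    by_contra! hws
    exact (csInf_le hZ_bdd ⟨⟨hs.1, hs.2.le.trans ht₀b⟩, hws⟩).not_gt hs.2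
  have hK : IsClosed (Icc a b ∩ (w - L) ⁻¹' Ici 0) :=
    (hw.sub hL).preimage_isClosed_of_isClosed isClosed_Icc isClosed_Ici
  have hsub : Ico a t₀ ⊆ Icc a b ∩ (w - L) ⁻¹' Ici 0 := fun s hs =>
    ⟨⟨hs.1, hs.2.le.trans ht₀b⟩, sub_nonneg.2 <| hbound s ⟨hs.1, hs.2.le.trans ht₀b⟩
      fun u hu => hpos u ⟨hu.1, hu.2.trans_lt hs.2⟩⟩
  have ht₀ : t₀ ∈ closure (Ico a t₀) := by
    rw [closure_Ico hat₀.ne]; exact right_mem_Icc.2 hat₀.le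
  have hLw : L t₀ ≤ w t₀ := sub_nonneg.1 (hK.closure_subset_iff.2 hsub ht₀).2
  linarith [hL_pos t₀ ⟨ha₀, ht₀b⟩]

theorem ode_decay_supersolution_general
    (p γ α T : ℝ) (hp : 0 ≤ p) (hγ : 0 < γ) (hα : 0 < α)
    (w w' : ℝ → ℝ) (f : ℝ → ℝ)
    (hw_deriv : ∀ t ∈ Icc (0:ℝ) T, HasDerivAt w (w' t) t)
    (hw0 : 0 < w 0)
    (hf_cont : ContinuousOn f (Icc (0:ℝ) T))
    (hf_int : ∀ t ∈ Icc (0:ℝ) T,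
      |∫ s in (0:ℝ)..t, (1 + s) ^ p * f s| ≤
        min (1 / (4 * γ * (w 0) ^ γ)) (α / (2 * (p + 1))) * (1 + t) ^ (p + 1))
    (hineq : ∀ t ∈ Icc (0:ℝ) T,
      w' t ≥ -2 * (1 + t) ^ p * (w t) ^ (1 + γ) * (α + f t)) :
    ∀ t ∈ Icc (0:ℝ) T,
      w t ≥ w 0 * (1 + 3 * α * γ * (w 0) ^ γ / (p + 1)) ^ (-(1 / γ)) *
        (1 + t) ^ (-(p + 1) / γ) := by
  set C := 1 + 3 * α * γ * w 0 ^ γ / (p + 1)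
  have hC : 0 < C := by positivity
  have hbase : ∀ t ∈ Icc (0:ℝ) T, 0 < 1 + t := fun t ht => by linarith [ht.1]
  have hbound : ∀ t ∈ Icc (0:ℝ) T, (∀ s ∈ Icc 0 t, 0 < w s) →
      w 0 * C ^ (-(1 / γ)) * (1 + t) ^ (-(p + 1) / γ) ≤ w t := fun t ht hpos => by
    have hsub : Icc 0 t ⊆ Icc 0 T := Icc_subset_Icc_right ht.2
    have hf_int_le : ∫ s in (0:ℝ)..t, (1 + s) ^ p * f s ≤ α / (2 * (p + 1)) * (1 + t) ^ (p + 1) :=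
      (le_abs_self _).trans <| (hf_int t ht).trans <|
        mul_le_mul_of_nonneg_right (min_le_right _ _) (rpow_nonneg (hbase t ht).le _)
    exact mul_rpow_le_of_rpow_neg_le hγ hw0 (hpos t ⟨ht.1, le_rfl⟩) hC (hbase t ht) <|
      rpow_neg_le_of_supersolution (by linarith) hγ.le hα.le ht.1 hpos
        (fun s hs => hw_deriv s (hsub hs)) (hf_cont.mono hsub) hf_int_le
        fun s hs => hineq s (hsub hs)
  have hL : ContinuousOn (fun t => w 0 * C ^ (-(1 / γ)) * (1 + t) ^ (-(p + 1) / γ)) (Icc 0 T) :=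
    continuousOn_const.mul <| (continuousOn_const.add continuousOn_id).rpow_const
      fun t ht => Or.inl (hbase t ht).ne'
  have hw_pos : ∀ t ∈ Icc (0:ℝ) T, 0 < w t :=
    pos_of_forall_pos_imp_le (fun t ht => (hw_deriv t ht).continuousAt.continuousWithinAt) hL
      (fun t ht => have := hbase t ht; by positivity) hw0 hbound
  exact fun t ht => hbound t ht fun s hs => hw_pos s (Icc_subset_Icc_right ht.2 hs)

theorem ode_decay_supersolution
    (p γ α T : ℝ) (hp : 0 ≤ p) (hγ : 0 < γ) (hα : 0 < α) (hT : 0 < T)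
    (w w' : ℝ → ℝ) (f : ℝ → ℝ)
    (hw_nonneg : ∀ t ∈ Icc (0:ℝ) T, 0 ≤ w t)
    (hw_deriv : ∀ t ∈ Icc (0:ℝ) T, HasDerivAt w (w' t) t)
    (hw'_cont : ContinuousOn w' (Icc (0:ℝ) T))
    (hw0 : 0 < w 0)
    (hf_cont : ContinuousOn f (Icc (0:ℝ) T))
    (hf_int : ∀ t ∈ Icc (0:ℝ) T,
      |∫ s in (0:ℝ)..t, (1 + s) ^ p * f s| ≤
        min (1 / (4 * γ * (w 0) ^ γ)) (α / (2 * (p + 1))) * (1 + t) ^ (p + 1))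
    (hineq : ∀ t ∈ Icc (0:ℝ) T,
      w' t ≥ -2 * (1 + t) ^ p * (w t) ^ (1 + γ) * (α + f t)) :
    ∀ t ∈ Icc (0:ℝ) T,
      w t ≥ w 0 * (1 + 3 * α * γ * (w 0) ^ γ / (p + 1)) ^ (-(1 / γ)) *
        (1 + t) ^ (-(p + 1) / γ) :=
  ode_decay_supersolution_general p γ α T hp hγ hα w w' f hw_deriv hw0 hf_cont hf_int hineq
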